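/- If $R$ is a normal commutative ring without zero divisors, then $R[X]$ is normal: whenever $P, Q \in R[X]$ satisfy a relation $P^n + A_1 Q P^{n-1} + \cdots + A_n Q^n = 0$ with $A_i \in R[X]$, then $P \in (Q)$. -/

import Mathlib

open Polynomial

/-- A commutative ring is *normal* if every element integral over a principal
ideal `(a)` belongs to `(a)`. -/
def IsNormalRing (R : Type*) [CommRing R] : Prop :=
  ∀ b a : R,
    (∃ n : ℕ, 0 < n ∧ ∃ u : ℕ → R,
      b ^ n + ∑ i ∈ Finset.range n, u i * a ^ (i + 1) * b ^ (n - 1 - i) = 0) →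
    b ∈ Ideal.span {a}

/-- In an integrally closed domain, an element integral over a principal ideal `(a)`
(in the explicit sense used here) is divisible by `a`. -/
lemma dvd_of_integral_over_span {S : Type*} [CommRing S] [IsDomain S] [IsIntegrallyClosed S]
    (a b : S) (n : ℕ) (hn : 0 < n) (u : ℕ → S)
    (h : b ^ n + ∑ i ∈ Finset.range n, u i * a ^ (i + 1) * b ^ (n - 1 - i) = 0) :
    a ∣ b := by
  rcases eq_or_ne a 0 with rfl | ha
  · have hb : b ^ n = 0 := by
      simpa [zero_pow (Nat.succ_ne_zero _)] using h
    rw [pow_eq_zero_iff hn.ne'] at hb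
    simp [hb]
  · set F := FractionRing S
    set φ := algebraMap S F with hφdef
    have hφ : Function.Injective φ := IsFractionRing.injective S F
    have haF : φ a ≠ 0 := fun h0 => ha (hφ (by simpa using h0))
    set t : F := φ b / φ a with ht
    have hb : φ b = t * φ a := (div_mul_cancel₀ _ haF).symm
    have h' := congrArg φ h
    simp only [map_add, map_mul, map_pow, map_sum, map_zero] at h'
    have key : t ^ n + ∑ i ∈ Finset.range n, φ (u i) * t ^ (n - 1 - i) = 0 := by
      have h2 : φ a ^ n * (t ^ n + ∑ i ∈ Finset.range n, φ (u i) * t ^ (n - 1 - i)) = 0 := by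
        rw [mul_add, Finset.mul_sum, ← h']
        congr 1
        · rw [hb, mul_pow]; ring
        · refine Finset.sum_congr rfl fun i hi => ?_
          have hsum : i + 1 + (n - 1 - i) = n := by
            have := Finset.mem_range.mp hi; omega
          rw [hb, mul_pow,
            show φ a ^ n = φ a ^ (i + 1) * φ a ^ (n - 1 - i) from by rw [← pow_add, hsum]]
          ring
      exact (mul_eq_zero.mp h2).resolve_left (pow_ne_zero _ haF)
    have hint : IsIntegral S t := by
      refine ⟨X ^ n + ∑ i ∈ Finset.range n, C (u i) * X ^ (n - 1 - i), ?_, ?_⟩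
      · refine (monic_X_pow n).add_of_left ?_
        rw [degree_X_pow]
        refine lt_of_le_of_lt (degree_sum_le _ _) ?_
        rw [Finset.sup_lt_iff (by exact_mod_cast WithBot.bot_lt_coe n)]
        intro i hi
        refine lt_of_le_of_lt (degree_C_mul_X_pow_le _ _) ?_
        exact_mod_cast show (n - 1 - i : ℕ) < n by omega
      · have : (Polynomial.aeval t)
            (X ^ n + ∑ i ∈ Finset.range n, C (u i) * X ^ (n - 1 - i)) = 0 := by
          simp only [map_add, map_sum, map_mul, map_pow, aeval_X, aeval_C]
          exact key
        simpa [Polynomial.aeval_def] using this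
    obtain ⟨c, hc⟩ := IsIntegrallyClosed.isIntegral_iff.mp hint
    refine ⟨c, hφ ?_⟩
    rw [map_mul, hc, hb]; ring

/-- A normal domain (in the sense of `IsNormalRing`) is integrally closed. -/
lemma isIntegrallyClosed_of_isNormalRing {R : Type*} [CommRing R] [IsDomain R]
    (hR : IsNormalRing R) : IsIntegrallyClosed R := by
  rw [isIntegrallyClosed_iff (FractionRing R)]
  set φ := algebraMap R (FractionRing R) with hφdef
  have hφ : Function.Injective φ := IsFractionRing.injective R (FractionRing R)
  rintro x ⟨p, hmonic, hp⟩
  obtain ⟨b, a, haR, hx⟩ := IsFractionRing.div_surjective (A := R) x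
  have ha : a ≠ 0 := nonZeroDivisors.ne_zero haR
  have haF : φ a ≠ 0 := fun h0 => ha (hφ (by simpa using h0))
  set n := p.natDegree with hn
  have hn0 : 0 < n := by
    rcases Nat.eq_zero_or_pos n with h0 | h0
    · exfalso
      have : p = 1 := hmonic.natDegree_eq_zero.mp h0
      rw [this] at hp
      simp at hp
    · exact h0
  have hb : φ b = x * φ a := by rw [← hx, div_mul_cancel₀ _ haF]
  -- expand the integrality relation
  have hev : x ^ n + ∑ i ∈ Finset.range n, φ (p.coeff i) * x ^ i = 0 := by
    have := hp
    rw [← Polynomial.aeval_def, Polynomial.aeval_eq_sum_range, Finset.sum_range_succ] at this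
    rw [← hn] at this
    simpa [Algebra.smul_def, (show p.coeff n = 1 from hmonic.coeff_natDegree), add_comm] using this
  -- multiply by `φ a ^ n`
  have hrel : b ^ n + ∑ i ∈ Finset.range n, p.coeff i * a ^ (n - i) * b ^ i = 0 := by
    apply hφ
    simp only [map_add, map_mul, map_pow, map_sum, map_zero]
    have expand : φ b ^ n + ∑ i ∈ Finset.range n, φ (p.coeff i) * φ a ^ (n - i) * φ b ^ i
        = φ a ^ n * (x ^ n + ∑ i ∈ Finset.range n, φ (p.coeff i) * x ^ i) := by
      rw [mul_add, Finset.mul_sum]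
      congr 1
      · rw [hb, mul_pow]; ring
      · refine Finset.sum_congr rfl fun i hi => ?_
        have hsum : n - i + i = n := by
          have := Finset.mem_range.mp hi; omega
        rw [hb, mul_pow,
          show φ a ^ n = φ a ^ (n - i) * φ a ^ i from by rw [← pow_add, hsum]]
        ring
    rw [expand, hev, mul_zero]
  -- reindex to match the definition of `IsNormalRing`
  have hrel' : b ^ n + ∑ j ∈ Finset.range n,
      p.coeff (n - 1 - j) * a ^ (j + 1) * b ^ (n - 1 - j) = 0 := by
    rw [← hrel]
    congr 1
    rw [← Finset.sum_range_reflect (fun i => p.coeff i * a ^ (n - i) * b ^ i) n]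
    refine Finset.sum_congr rfl fun j hj => ?_
    have hj' := Finset.mem_range.mp hj
    show p.coeff (n - 1 - j) * a ^ (j + 1) * b ^ (n - 1 - j)
      = p.coeff (n - 1 - j) * a ^ (n - (n - 1 - j)) * b ^ (n - 1 - j)
    rw [show n - (n - 1 - j) = j + 1 from by omega]
  have hmem := hR b a ⟨n, hn0, fun j => p.coeff (n - 1 - j), hrel'⟩
  obtain ⟨c, hc⟩ := Ideal.mem_span_singleton.mp hmem
  refine ⟨c, ?_⟩
  rw [← hx, hc, map_mul]
  field_simp
  exact (mul_div_cancel_left₀ _ haF).symm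

theorem polynomial_normal_of_normal_without_zero_divisors {R : Type*}
    [CommRing R] (hR : IsNormalRing R)
    (hzd : ∀ x y : R, x * y = 0 → x = 0 ∨ y = 0) :
    ∀ P Q : R[X], (∃ n : ℕ, 0 < n ∧ ∃ A : ℕ → R[X],
        P ^ n + ∑ i ∈ Finset.range n, A i * Q ^ (i + 1) * P ^ (n - 1 - i) = 0) →
      P ∈ Ideal.span ({Q} : Set R[X]) := by
  intro P Q hPQ
  obtain ⟨n, hn, A, hrel⟩ := hPQ
  by_cases htriv : (1 : R) = 0
  · haveI : Subsingleton R := subsingleton_of_zero_eq_one htriv.symm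
    rw [Subsingleton.elim P 0]
    exact Ideal.zero_mem _
  haveI : Nontrivial R := ⟨⟨1, 0, htriv⟩⟩
  haveI : NoZeroDivisors R := ⟨fun {x y} h => hzd x y h⟩
  haveI : IsDomain R := NoZeroDivisors.to_isDomain R
  haveI : IsIntegrallyClosed R := isIntegrallyClosed_of_isNormalRing hR
  rcases eq_or_ne Q 0 with rfl | hQ
  · have hP : P ^ n = 0 := by
      simpa [zero_pow (Nat.succ_ne_zero _)] using hrel
    rw [pow_eq_zero_iff hn.ne'] at hP
    rw [hP]; exact Ideal.zero_mem _
  -- pass to `K[X]` where `K` is the fraction field of `R`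
  set K := FractionRing R
  set φ := algebraMap R K with hφdef
  have hφ : Function.Injective φ := IsFractionRing.injective R K
  have hmapinj : Function.Injective (Polynomial.map φ) := Polynomial.map_injective φ hφ
  set p := P.map φ with hpdef
  set q := Q.map φ with hqdef
  have hq0 : q ≠ 0 := fun h => hQ (hmapinj (by simpa using h))
  -- map the relation
  have hrelK : p ^ n + ∑ i ∈ Finset.range n,
      (A i).map φ * q ^ (i + 1) * p ^ (n - 1 - i) = 0 := by
    have := congrArg (Polynomial.map φ) hrel
    simpa [Polynomial.map_add, Polynomial.map_pow, Polynomial.map_mul,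
      Polynomial.map_sum] using this
  -- `q ∣ p` in `K[X]`
  have hdvd : q ∣ p :=
    dvd_of_integral_over_span q p n hn (fun i => (A i).map φ) hrelK
  obtain ⟨g, hg⟩ := hdvd
  -- derive an integral equation for `g` over (the image of) `R[X]`
  have hgeq : g ^ n + ∑ i ∈ Finset.range n, (A i).map φ * g ^ (n - 1 - i) = 0 := by
    have h2 : q ^ n * (g ^ n + ∑ i ∈ Finset.range n, (A i).map φ * g ^ (n - 1 - i)) = 0 := by
      rw [mul_add, Finset.mul_sum, ← hrelK]
      congr 1
      · rw [hg, mul_pow]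
      · refine Finset.sum_congr rfl fun i hi => ?_
        have hsum : i + 1 + (n - 1 - i) = n := by
          have := Finset.mem_range.mp hi; omega
        rw [hg, mul_pow,
          show q ^ n = q ^ (i + 1) * q ^ (n - 1 - i) from by rw [← pow_add, hsum]]
        ring
    exact (mul_eq_zero.mp h2).resolve_left (pow_ne_zero _ hq0)
  -- choose a large `N`
  set N := (Finset.range n).sup (fun i => (A i).natDegree) + g.natDegree + 1 with hN
  have hNg : g.natDegree < N := by omega
  have hNA : ∀ i ∈ Finset.range n, (A i).natDegree < N := fun i hi => by
    have h := Finset.le_sup (f := fun i => (A i).natDegree) hi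
    omega
  -- the auxiliary monic polynomial over `R`
  set H : R[X] := X ^ (N * n) + ∑ i ∈ Finset.range n, A i * X ^ (N * (n - 1 - i)) with hH
  have hHmonic : H.Monic := by
    refine (monic_X_pow (N * n)).add_of_left ?_
    rw [degree_X_pow]
    refine lt_of_le_of_lt (degree_sum_le _ _) ?_
    rw [Finset.sup_lt_iff (by exact_mod_cast WithBot.bot_lt_coe (N * n))]
    intro i hi
    rcases eq_or_ne (A i) 0 with h0 | h0
    · rw [h0, zero_mul, degree_zero]
      exact_mod_cast WithBot.bot_lt_coe (N * n)
    · refine lt_of_le_of_lt (degree_mul_le _ _) ?_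
      rw [degree_X_pow, degree_eq_natDegree h0]
      have hi' := Finset.mem_range.mp hi
      have h1 : (A i).natDegree + N * (n - 1 - i) < N * n := by
        have := hNA i hi
        have h2 : N * (n - 1 - i) ≤ N * (n - 1) := Nat.mul_le_mul_left _ (by omega)
        have h3 : N * (n - 1) + N = N * n := by
          have : n - 1 + 1 = n := by omega
          calc N * (n - 1) + N = N * (n - 1 + 1) := by ring
          _ = N * n := by rw [this]
        omega
      exact_mod_cast h1
  -- `X^N - g` is monic and divides `H.map φ`
  have hmonic2 : (X ^ N - g : K[X]).Monic := by
    have : (X ^ N + (-g) : K[X]).Monic := by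
      refine (monic_X_pow N).add_of_left ?_
      rw [degree_X_pow, degree_neg]
      refine lt_of_le_of_lt degree_le_natDegree ?_
      exact_mod_cast hNg
    simpa [sub_eq_add_neg] using this
  have hHmap : H.map φ = (X ^ N) ^ n +
      ∑ i ∈ Finset.range n, (A i).map φ * (X ^ N) ^ (n - 1 - i) := by
    simp [hH, Polynomial.map_add, Polynomial.map_pow, Polynomial.map_sum,
      Polynomial.map_mul, pow_mul]
  have hkey : H.map φ = ((X ^ N : K[X]) ^ n - g ^ n) +
      ∑ i ∈ Finset.range n, (A i).map φ * ((X ^ N : K[X]) ^ (n - 1 - i) - g ^ (n - 1 - i)) := by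
    rw [hHmap]
    have hsplit : ∑ i ∈ Finset.range n,
        (A i).map φ * ((X ^ N : K[X]) ^ (n - 1 - i) - g ^ (n - 1 - i))
        = ∑ i ∈ Finset.range n, (A i).map φ * (X ^ N : K[X]) ^ (n - 1 - i)
          - ∑ i ∈ Finset.range n, (A i).map φ * g ^ (n - 1 - i) := by
      rw [← Finset.sum_sub_distrib]
      exact Finset.sum_congr rfl fun i _ => mul_sub _ _ _
    rw [hsplit]
    linear_combination hgeq
  have hdvdH : (X ^ N - g : K[X]) ∣ H.map φ := by
    rw [hkey]
    exact dvd_add (sub_dvd_pow_sub_pow _ _ n)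
      (Finset.dvd_sum fun i _ => Dvd.dvd.mul_left (sub_dvd_pow_sub_pow _ _ _) _)
  obtain ⟨g', hg'⟩ := IsIntegrallyClosed.eq_map_mul_C_of_dvd K hHmonic hdvdH
  rw [hmonic2.leadingCoeff, C_1, mul_one] at hg'
  have hfinal : P.map φ = (Q * (X ^ N - g')).map φ := by
    rw [Polynomial.map_mul, Polynomial.map_sub, Polynomial.map_pow, Polynomial.map_X, hg']
    rw [show (X ^ N - (X ^ N - g) : K[X]) = g by ring]
    exact hg
  exact Ideal.mem_span_singleton.mpr ⟨_, hmapinj hfinal⟩
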